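/- (I − S) M⁻¹ = M⁻¹ (I − Sᵀ) = M_c⁻¹ P (the pseudoinverse of P M P). -/

import Mathlib

open Matrix

/-!
`P` commutes with `M_c = P M P + ν (1 - P)`, hence with `M_c⁻¹`, and `M_c` is symmetric positive
definite (on `range P` it is the compression of `M`, on `ker P` it is `ν`). Then
`1 - S = M_c⁻¹ P M` and `1 - Sᵀ = M P M_c⁻¹`, so both `(1 - S) M⁻¹` and `M⁻¹ (1 - Sᵀ)` reduce
to `M_c⁻¹ P = P M_c⁻¹`.
-/

theorem Commute.ringInverse_right {M₀ : Type*} [MonoidWithZero M₀] {a b : M₀}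
    (h : Commute a b) : Commute a (Ring.inverse b) := by
  by_cases hb : IsUnit b
  · obtain ⟨u, rfl⟩ := hb
    rw [Ring.inverse_unit]
    exact h.units_inv_right
  · rw [Ring.inverse_non_unit _ hb]
    exact Commute.zero_right a

theorem IsIdempotentElem.commute_mul_mul_add_smul_one_sub {A R : Type*} [Ring A] [SMul R A]
    [IsScalarTower R A A] [SMulCommClass R A A] {p : A} (hp : IsIdempotentElem p) (m : A)
    (ν : R) : Commute p (p * m * p + ν • (1 - p)) := by
  have hpmp : Commute p (p * m * p) := by
    change p * (p * m * p) = p * m * p * p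
    rw [← mul_assoc, ← mul_assoc, hp.eq, mul_assoc _ p p, hp.eq]
  exact hpmp.add_right (((Commute.one_right p).sub_right (Commute.refl p)).smul_right ν)

namespace Matrix

variable {m n R : Type*} [Fintype m] [Fintype n]

theorem star_dotProduct_conjTranspose_mul_mul_mulVec [CommRing R] [StarRing R]
    (A : Matrix m m R) (B : Matrix m n R) (x : n → R) :
    star x ⬝ᵥ (Bᴴ * A * B) *ᵥ x = star (B *ᵥ x) ⬝ᵥ A *ᵥ (B *ᵥ x) := by
  simp only [star_mulVec, dotProduct_mulVec, vecMul_vecMul, ← mulVec_mulVec]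

variable [DecidableEq n] [CommRing R] [StarRing R]

theorem star_dotProduct_mul_mul_add_smul_one_sub_mulVec {P : Matrix n n R}
    (hP : IsStarProjection P) (M : Matrix n n R) (ν : R) (x : n → R) :
    star x ⬝ᵥ (P * M * P + ν • (1 - P)) *ᵥ x =
      star (P *ᵥ x) ⬝ᵥ M *ᵥ (P *ᵥ x) + ν * (star ((1 - P) *ᵥ x) ⬝ᵥ (1 - P) *ᵥ x) := by
  have hQ := hP.one_sub
  have hP_conj : P * M * P = Pᴴ * M * P := by rw [hP.isSelfAdjoint.isHermitian.eq]
  have hQ_conj : 1 - P = (1 - P)ᴴ * 1 * (1 - P) := by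
    rw [hQ.isSelfAdjoint.isHermitian.eq, mul_one, hQ.isIdempotentElem.eq]
  conv_lhs => rw [hP_conj, hQ_conj]
  rw [add_mulVec, dotProduct_add, smul_mulVec, dotProduct_smul, smul_eq_mul,
    star_dotProduct_conjTranspose_mul_mul_mulVec, star_dotProduct_conjTranspose_mul_mul_mulVec,
    one_mulVec]

theorem PosDef.mul_mul_add_smul_one_sub [PartialOrder R] [StarOrderedRing R]
    [IsStrictOrderedRing R] [NoZeroDivisors R] {M P : Matrix n n R} (hM : M.PosDef)
    (hP : IsStarProjection P) {ν : R} (hν : 0 < ν) :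
    (P * M * P + ν • (1 - P)).PosDef := by
  have hherm : (P * M * P + ν • (1 - P)).IsHermitian := by
    have hPMP : (P * M * P).IsHermitian := by
      simpa only [hP.isSelfAdjoint.isHermitian.eq] using isHermitian_conjTranspose_mul_mul P hM.1
    exact hPMP.add (hP.one_sub.isSelfAdjoint.isHermitian.smul hν.le.isSelfAdjoint)
  refine PosDef.of_dotProduct_mulVec_pos hherm fun x hx => ?_
  rw [star_dotProduct_mul_mul_add_smul_one_sub_mulVec hP]
  by_cases hPx : P *ᵥ x = 0
  · have hQx : (1 - P) *ᵥ x = x := by rw [sub_mulVec, one_mulVec, hPx, sub_zero]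
    rw [hPx, hQx, mulVec_zero, dotProduct_zero, zero_add]
    exact mul_pos hν (dotProduct_star_self_pos_iff.mpr hx)
  · exact add_pos_of_pos_of_nonneg (hM.dotProduct_mulVec_pos hPx)
      (mul_nonneg hν.le (dotProduct_star_self_nonneg _))

end Matrix

theorem I_sub_S_mul_Minv {n : ℕ}
    (M P : Matrix (Fin n) (Fin n) ℝ) (hM : M.PosDef)
    (hP : P * P = P) (hPt : Pᵀ = P) (ν : ℝ) (hν : 0 < ν)
    (Mc S : Matrix (Fin n) (Fin n) ℝ)
    (hMc : Mc = P * M * P + ν • (1 - P)) (hS : S = 1 - Mc⁻¹ * P * M) :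
    (1 - S) * M⁻¹ = M⁻¹ * (1 - Sᵀ) ∧ M⁻¹ * (1 - Sᵀ) = Mc⁻¹ * P := by
  have hProj : IsStarProjection P := ⟨hP, by rw [IsSelfAdjoint, star_eq_conjTranspose,
    conjTranspose_eq_transpose_of_trivial, hPt]⟩
  have hMc_pd : Mc.PosDef := hMc ▸ hM.mul_mul_add_smul_one_sub hProj hν
  have hcomm : Commute P Mc⁻¹ := by
    rw [nonsing_inv_eq_ringInverse, hMc]
    exact (hProj.isIdempotentElem.commute_mul_mul_add_smul_one_sub M ν).ringInverse_right
  have hMc_inv_symm : Mc⁻¹ᵀ = Mc⁻¹ := by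
    simpa only [conjTranspose_eq_transpose_of_trivial] using hMc_pd.isHermitian.inv.eq
  have hdet : IsUnit M.det := (isUnit_iff_isUnit_det M).mp hM.isUnit
  have h1S : 1 - S = Mc⁻¹ * P * M := by rw [hS, sub_sub_cancel]
  have h1St : 1 - Sᵀ = M * P * Mc⁻¹ := by
    rw [← transpose_one, ← transpose_sub, h1S, transpose_mul, transpose_mul, hMc_inv_symm, hPt,
      ← conjTranspose_eq_transpose_of_trivial M, hM.isHermitian.eq, mul_assoc]
  have hleft : (1 - S) * M⁻¹ = Mc⁻¹ * P := by
    rw [h1S, mul_nonsing_inv_cancel_right _ _ hdet]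
  have hright : M⁻¹ * (1 - Sᵀ) = Mc⁻¹ * P := by
    rw [h1St, mul_assoc M, nonsing_inv_mul_cancel_left _ _ hdet, hcomm.eq]
  exact ⟨hleft.trans hright.symm, hright⟩
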